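/- arXiv:2311.05064 — 9 statements merged into one kernel-verified Lean document; each statement's English description precedes it below -/
import Mathlib

section
/- Let w_1,...,w_p ∈ ℝ^d with p = n(n-1)/2·(d-1)+1 be such that any d of them are linearly independent. Then for any x_1,...,x_n ∈ ℝ^d that are pairwise distinct, there exists k ∈ {1,...,p} such that ⟨w_k, x_i⟩ ≠ ⟨w_k, x_j⟩ for all i ≠ j. -/
open Finset

/-- A nonzero vector is orthogonal to at most `d - 1` of the `w_k`. -/
lemma bad_card_le {d p : ℕ} (w : Fin p → (Fin d → ℝ))
    (hw : ∀ s : Finset (Fin p), s.card = d → LinearIndependent ℝ (fun i : s => w i))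
    (v : Fin d → ℝ) (hv : v ≠ 0) :
    (univ.filter (fun k => ∑ t, w k t * v t = 0)).card ≤ d - 1 := by
  by_contra h
  push_neg at h
  have hd : 1 ≤ d := by
    by_contra hd
    apply hv
    funext t
    exact absurd t.2 (by omega)
  have hcard : d ≤ (univ.filter (fun k => ∑ t, w k t * v t = 0)).card := by omega
  obtain ⟨s, hs, hscard⟩ := Finset.exists_subset_card_eq hcard
  have hli := hw s hscard
  haveI : Nonempty s := Finset.Nonempty.to_subtype (Finset.card_pos.mp (by omega))
  -- the linear functional y ↦ ∑ t, y t * v t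
  let φ : (Fin d → ℝ) →ₗ[ℝ] ℝ :=
    { toFun := fun y => ∑ t, y t * v t
      map_add' := fun a b => by simp [add_mul, Finset.sum_add_distrib]
      map_smul' := fun c a => by simp [Finset.mul_sum, mul_assoc] }
  have hspan : Submodule.span ℝ (Set.range (fun i : s => w i)) = ⊤ := by
    apply hli.span_eq_top_of_card_eq_finrank
    simp [Fintype.card_coe, hscard, Module.finrank_fintype_fun_eq_card]
  have hker : Submodule.span ℝ (Set.range (fun i : s => w i)) ≤ LinearMap.ker φ := by
    rw [Submodule.span_le]
    rintro _ ⟨⟨k, hk⟩, rfl⟩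
    have := (Finset.mem_filter.mp (hs hk)).2
    simpa [φ, LinearMap.mem_ker] using this
  have hφ : φ v = 0 := by
    have : v ∈ LinearMap.ker φ := hker (hspan ▸ Submodule.mem_top)
    simpa using this
  simp only [φ, LinearMap.coe_mk, AddHom.coe_mk] at hφ
  have : ∀ t ∈ (univ : Finset (Fin d)), v t * v t = 0 := by
    rw [Finset.sum_eq_zero_iff_of_nonneg (fun t _ => mul_self_nonneg (v t))] at hφ
    exact hφ
  apply hv
  funext t
  exact mul_self_eq_zero.mp (this t (mem_univ t))

lemma pairs_card (n : ℕ) :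
    (Finset.univ.biUnion
      (fun j : Fin n => (Finset.Iio j).image (fun i => (i, j)))).card = n * (n - 1) / 2 := by
  rw [Finset.card_biUnion]
  · have : ∀ j : Fin n, ((Finset.Iio j).image (fun i => (i, j))).card = (j : ℕ) := by
      intro j
      rw [Finset.card_image_of_injective _ (fun a b h => (Prod.mk.injEq _ _ _ _ ▸ h).1)]
      simp [Fin.card_Iio]
    simp only [this]
    rw [Fin.sum_univ_eq_sum_range (fun i => i), Finset.sum_range_id]
  · intro a _ b _ hab
    simp only [Finset.disjoint_left, Finset.mem_image]
    rintro q ⟨i, _, rfl⟩ ⟨i', _, h⟩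
    exact hab ((Prod.mk.injEq _ _ _ _ ▸ h.symm).2)

/-- If any `d` of the `p = n(n-1)/2⋅(d-1)+1` vectors `w_k` are linearly independent, then for
pairwise distinct `x_1,…,x_n` there is some `k` whose projections `⟨w_k, x_i⟩` are pairwise
distinct. -/
theorem exists_separating_projection {d n p : ℕ}
    (hp : p = n * (n - 1) / 2 * (d - 1) + 1)
    (w : Fin p → (Fin d → ℝ))
    (hw : ∀ s : Finset (Fin p), s.card = d → LinearIndependent ℝ (fun i : s => w i))
    (x : Fin n → (Fin d → ℝ)) (hx : Function.Injective x) :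
    ∃ k : Fin p, ∀ i j : Fin n, i ≠ j →
      (∑ t, w k t * x i t) ≠ (∑ t, w k t * x j t) := by
  have hp1 : 0 < p := by omega
  let P : Finset (Fin n × Fin n) :=
    Finset.univ.biUnion (fun j : Fin n => (Finset.Iio j).image (fun i => (i, j)))
  let B : Finset (Fin p) :=
    P.biUnion (fun q => univ.filter (fun k => ∑ t, w k t * (x q.1 t - x q.2 t) = 0))
  have hB : B.card ≤ n * (n - 1) / 2 * (d - 1) := by
    calc B.card ≤ ∑ q ∈ P, (univ.filter
          (fun k => ∑ t, w k t * (x q.1 t - x q.2 t) = 0)).card := Finset.card_biUnion_le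
      _ ≤ ∑ _q ∈ P, (d - 1) := by
          apply Finset.sum_le_sum
          intro q hq
          apply bad_card_le w hw
          have hne : q.1 ≠ q.2 := by
            simp only [P, Finset.mem_biUnion, Finset.mem_image, Finset.mem_Iio] at hq
            obtain ⟨j, _, i, hij, rfl⟩ := hq
            exact ne_of_lt hij
          intro hveq
          apply hne
          apply hx
          funext t
          have := congrFun hveq t
          simpa [sub_eq_zero] using this
      _ = n * (n - 1) / 2 * (d - 1) := by rw [Finset.sum_const, smul_eq_mul, pairs_card]
  have : B ≠ univ := by
    intro h
    rw [h, Finset.card_univ, Fintype.card_fin] at hB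
    omega
  obtain ⟨k, hk⟩ : ∃ k : Fin p, k ∉ B := by
    by_contra hcon
    push_neg at hcon
    exact this (Finset.eq_univ_of_forall hcon)
  refine ⟨k, fun i j hij heq => ?_⟩
  -- wlog i < j
  have key : ∀ a b : Fin n, a < b → (∑ t, w k t * x a t) ≠ (∑ t, w k t * x b t) := by
    intro a b hab habs
    apply hk
    simp only [B, Finset.mem_biUnion]
    refine ⟨(a, b), ?_, ?_⟩
    · simp only [P, Finset.mem_biUnion, Finset.mem_image, Finset.mem_Iio]
      exact ⟨b, mem_univ b, a, hab, rfl⟩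
    · simp only [Finset.mem_filter, mem_univ, true_and]
      simp only [mul_sub, Finset.sum_sub_distrib]
      rw [habs, sub_self]
  rcases lt_or_gt_of_ne hij with h | h
  · exact key i j h heq
  · exact key j i h heq.symm
end

section
/- Let p = n(n-1)/2·(d-1)+1 and w_1,...,w_p ∈ ℝ^d such that any d of them form a basis. Define φ_k(x) = ∏_{1 ≤ i < j ≤ n} (⟨w_k, x_j⟩ - ⟨w_k, x_i⟩). Then for x = (x_1,...,x_n) ∈ (ℝ^d)^n, we have φ_1(x) = ... = φ_p(x) = 0 if and only if x_i = x_j for some i ≠ j. -/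
/-- For a nonzero vector `v`, at most `d - 1` of the `w k` are orthogonal to `v`. -/
theorem vandermonde_aux_ortho_card {d p : ℕ} (w : Fin p → (Fin d → ℝ))
    (hw : ∀ s : Finset (Fin p), s.card = d → LinearIndependent ℝ (fun i : s => w i))
    (v : Fin d → ℝ) (hv : v ≠ 0) :
    (Finset.univ.filter fun k => ∑ t, w k t * v t = 0).card ≤ d - 1 := by
  by_contra h
  push_neg at h
  obtain ⟨t0, ht0⟩ := Function.ne_iff.mp hv
  simp only [Pi.zero_apply] at ht0
  have hd : 1 ≤ d := Nat.one_le_iff_ne_zero.mpr (by rintro rfl; exact Fin.elim0 t0)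
  have hd' : d ≤ (Finset.univ.filter fun k => ∑ t, w k t * v t = 0).card := by omega
  obtain ⟨s, hs, hcard⟩ := Finset.exists_subset_card_eq hd'
  have hli := hw s hcard
  set f : (Fin d → ℝ) →ₗ[ℝ] ℝ :=
    { toFun := fun u => ∑ t, u t * v t
      map_add' := fun a b => by simp [add_mul, Finset.sum_add_distrib]
      map_smul' := fun c a => by simp [Finset.mul_sum, mul_assoc] } with hf
  have hker : ∀ i : s, w i ∈ LinearMap.ker f := by
    rintro ⟨i, hi⟩
    have := hs hi
    simp only [Finset.mem_filter] at this
    simpa [hf] using this.2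
  have hrange : LinearMap.range f = ⊤ := by
    rw [LinearMap.range_eq_top]
    intro c
    refine ⟨fun t => if t = t0 then c / v t0 else 0, ?_⟩
    simp only [hf, LinearMap.coe_mk, AddHom.coe_mk, ite_mul, zero_mul]
    rw [Finset.sum_ite_eq' Finset.univ t0 (fun t => c / v t0 * v t)]
    simp [div_mul_cancel₀, ht0]
  have hspan : Submodule.span ℝ (Set.range fun i : s => w i) ≤ LinearMap.ker f := by
    rw [Submodule.span_le]
    rintro _ ⟨i, rfl⟩
    exact hker i
  have h1 : Module.finrank ℝ (Submodule.span ℝ (Set.range fun i : s => w i)) = d := by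
    rw [finrank_span_eq_card hli]
    simp [hcard]
  have h2 : Module.finrank ℝ (LinearMap.ker f) = d - 1 := by
    have := LinearMap.finrank_range_add_finrank_ker f
    rw [hrange] at this
    simp [Module.finrank_fintype_fun_eq_card] at this
    omega
  have := Submodule.finrank_mono hspan
  omega

/-- The number of pairs `(i, j)` with `i < j` in `Fin n` is `n * (n - 1) / 2`. -/
theorem vandermonde_aux_pairs_card (n : ℕ) :
    (Finset.univ.filter (fun q : Fin n × Fin n => q.1 < q.2)).card = n * (n - 1) / 2 := by
  set P := Finset.univ.filter (fun q : Fin n × Fin n => q.1 < q.2) with hP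
  set Q := Finset.univ.filter (fun q : Fin n × Fin n => q.2 < q.1) with hQ
  have hcard : P.card = Q.card := by
    apply Finset.card_bij (fun q _ => q.swap)
    · intro q hq
      simp only [hP, hQ, Finset.mem_filter, Finset.mem_univ, true_and, Prod.fst_swap,
        Prod.snd_swap] at *
      exact hq
    · intro a ha b hb hab
      exact Prod.ext (congrArg Prod.snd hab) (congrArg Prod.fst hab)
    · intro q hq
      refine ⟨q.swap, ?_, by simp⟩
      simp only [hP, hQ, Finset.mem_filter, Finset.mem_univ, true_and, Prod.fst_swap,
        Prod.snd_swap] at *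
      exact hq
  have hdisj : Disjoint P Q := by
    rw [Finset.disjoint_left]
    intro q hq hq'
    simp only [hP, hQ, Finset.mem_filter] at *
    omega
  have hunion : P ∪ Q = (Finset.univ : Finset (Fin n × Fin n)).filter (fun q => q.1 ≠ q.2) := by
    ext q
    simp only [hP, hQ, Finset.mem_union, Finset.mem_filter, Finset.mem_univ, true_and]
    constructor
    · rintro (h | h) <;> omega
    · intro h
      rcases lt_or_gt_of_ne (Fin.val_ne_of_ne h) with h' | h'
      · exact Or.inl (by omega)
      · exact Or.inr (by omega)
  have hoff : ((Finset.univ : Finset (Fin n × Fin n)).filter (fun q => q.1 ≠ q.2)).card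
      = n * n - n := by
    have : (Finset.univ : Finset (Fin n × Fin n)).filter (fun q => q.1 ≠ q.2)
        = (Finset.univ : Finset (Fin n)).offDiag := by
      ext q; simp [Finset.mem_offDiag]
    rw [this, Finset.offDiag_card]
    simp
  have h2 : P.card + Q.card = n * n - n := by
    rw [← Finset.card_union_of_disjoint hdisj, hunion, hoff]
  have h3 : n * (n - 1) = n * n - n := by
    rw [Nat.mul_sub, Nat.mul_one]
  omega

/-- With `p = n(n-1)/2⋅(d-1)+1` vectors `w_k`, any `d` of which are linearly independent, the
Vandermonde products `φ_k(x) = ∏_{i<j}(⟨w_k,x_j⟩ - ⟨w_k,x_i⟩)` all vanish at `x` iff two of the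
`x_i` coincide. -/
theorem vandermonde_products_vanish_iff {d n p : ℕ}
    (hp : p = n * (n - 1) / 2 * (d - 1) + 1)
    (w : Fin p → (Fin d → ℝ))
    (hw : ∀ s : Finset (Fin p), s.card = d → LinearIndependent ℝ (fun i : s => w i))
    (x : Fin n → (Fin d → ℝ)) :
    (∀ k : Fin p,
        (∏ q ∈ Finset.univ.filter (fun q : Fin n × Fin n => q.1 < q.2),
          ((∑ t, w k t * x q.2 t) - (∑ t, w k t * x q.1 t))) = 0)
    ↔ ∃ i j : Fin n, i ≠ j ∧ x i = x j := by
  constructor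
  · intro hall
    by_contra hno
    push_neg at hno
    set P := Finset.univ.filter (fun q : Fin n × Fin n => q.1 < q.2) with hPdef
    set B := P.biUnion
      (fun q => Finset.univ.filter fun k => ∑ t, w k t * (x q.2 t - x q.1 t) = 0) with hBdef
    have hBcard : B.card ≤ P.card * (d - 1) := by
      calc B.card ≤ ∑ q ∈ P,
            (Finset.univ.filter fun k => ∑ t, w k t * (x q.2 t - x q.1 t) = 0).card :=
          Finset.card_biUnion_le
        _ ≤ ∑ _q ∈ P, (d - 1) := by
            refine Finset.sum_le_sum fun q hq => ?_
            apply vandermonde_aux_ortho_card w hw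
            intro h0
            have hne : q.1 ≠ q.2 := by
              simp only [hPdef, Finset.mem_filter] at hq
              exact ne_of_lt hq.2
            apply hno q.1 q.2 hne
            funext t
            have := congrFun h0 t
            simp only [Pi.zero_apply] at this
            linarith
        _ = P.card * (d - 1) := by rw [Finset.sum_const, smul_eq_mul]
    have hlt : B.card < p := by
      rw [vandermonde_aux_pairs_card n] at hBcard
      omega
    have hne : Bᶜ.Nonempty := by
      rw [← Finset.card_pos, Finset.card_compl]
      simp only [Fintype.card_fin]
      omega
    obtain ⟨k, hk⟩ := hne
    rw [Finset.mem_compl] at hk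
    refine absurd (hall k) (Finset.prod_ne_zero_iff.mpr fun q hq => ?_)
    intro heq
    apply hk
    refine Finset.mem_biUnion.mpr ⟨q, hq, Finset.mem_filter.mpr ⟨Finset.mem_univ k, ?_⟩⟩
    simp only [mul_sub]
    rw [Finset.sum_sub_distrib]
    exact heq
  · rintro ⟨i, j, hij, hxij⟩ k
    rcases lt_or_gt_of_ne hij with h | h
    · refine Finset.prod_eq_zero (Finset.mem_filter.mpr ⟨Finset.mem_univ (i, j), h⟩) ?_
      simp [hxij]
    · refine Finset.prod_eq_zero (Finset.mem_filter.mpr ⟨Finset.mem_univ (j, i), h⟩) ?_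
      simp [hxij]
end

section
/- Under the hypotheses of the main representation theorem (η : Ω^n → ℝ^m anti-symmetric continuous satisfying conditions (ii) and (iii), f anti-symmetric continuous), the assignment g(η(x)) := f(x) is well-defined: if η(x) = η(x') then f(x) = f(x'). -/
/-- Well-definedness of `g(η(x)) := f(x)`: under the hypotheses on `η` and anti-symmetry of `f`,
`η x = η x'` implies `f x = f x'`. -/
theorem g_well_defined {d n m : ℕ}
    (Ω : Set (Fin d → ℝ))
    (D : Set (Fin n → (Fin d → ℝ))) (hD : D = {x | ∀ i, x i ∈ Ω})
    (η : (Fin n → (Fin d → ℝ)) → (Fin m → ℝ))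
    (hηa : ∀ x ∈ D, ∀ σ : Equiv.Perm (Fin n),
      η (x ∘ σ) = ((Equiv.Perm.sign σ : ℤ) : ℝ) • η x)
    (hη2 : ∀ x ∈ D, (η x = 0 ↔ ∃ i j : Fin n, i ≠ j ∧ x i = x j))
    (hη3 : ∀ x ∈ D, ∀ x' ∈ D, η x = η x' → η x ≠ 0 →
      ∃ σ : Equiv.Perm (Fin n), x' = x ∘ σ)
    (f : (Fin n → (Fin d → ℝ)) → ℝ)
    (hfa : ∀ x ∈ D, ∀ σ : Equiv.Perm (Fin n),
      f (x ∘ σ) = ((Equiv.Perm.sign σ : ℤ) : ℝ) * f x)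
    (x : Fin n → (Fin d → ℝ)) (hx : x ∈ D)
    (x' : Fin n → (Fin d → ℝ)) (hx' : x' ∈ D)
    (heq : η x = η x') :
    f x = f x' := by
  have key : ∀ y ∈ D, η y = 0 → f y = 0 := by
    intro y hy hy0
    obtain ⟨i, j, hij, hyij⟩ := (hη2 y hy).mp hy0
    have hcomp : y ∘ (Equiv.swap i j) = y := by
      funext k
      simp only [Function.comp_apply]
      rcases eq_or_ne k i with rfl | hki
      · rw [Equiv.swap_apply_left, hyij]
      rcases eq_or_ne k j with rfl | hkj
      · rw [Equiv.swap_apply_right, hyij]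
      · rw [Equiv.swap_apply_of_ne_of_ne hki hkj]
    have := hfa y hy (Equiv.swap i j)
    rw [hcomp, Equiv.Perm.sign_swap hij] at this
    push_cast at this
    linarith
  by_cases h0 : η x = 0
  · rw [key x hx h0, key x' hx' (heq ▸ h0)]
  · obtain ⟨σ, hσ⟩ := hη3 x hx x' hx' heq h0
    have hsign : ((Equiv.Perm.sign σ : ℤ) : ℝ) = 1 := by
      have hη' := hηa x hx σ
      rw [← hσ, ← heq] at hη'
      rcases Int.units_eq_one_or (Equiv.Perm.sign σ) with h | h <;> rw [h]
      · norm_num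
      · exfalso
        rw [h] at hη'
        push_cast at hη'
        apply h0
        have : (2 : ℝ) • η x = 0 := by
          rw [two_smul]
          nth_rewrite 1 [hη']
          simp
        simpa using this
    rw [hσ, hfa x hx σ, hsign, one_mul]
end

section
/- Let η : (ℝ^d)^n → ℝ^m be anti-symmetric and continuously differentiable. If x = (x_1,...,x_n) satisfies x_{i_1} = x_{i_2} for some i_1 ≠ i_2, then the Jacobian matrix Jη(x) ∈ ℝ^{m×nd} does not have full column rank; in fact, ∂η/∂x_{i_1,j}(x) = -∂η/∂x_{i_2,j}(x) for each j ∈ {1,...,d}. -/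
/-!
Precomposing with the transposition of `i₁` and `i₂` negates `η` and fixes `x`, so by the chain
rule the derivative of `η` at `x` anticommutes with that transposition. The transposition carries
the `(i₂, j)` coordinate direction to the `(i₁, j)` one, which gives the relation between partial
derivatives; and then the nonzero vector `e_{i₁,j} + e_{i₂,j}` lies in the kernel.
-/

open Function

section UpdateZero

variable {ι M : Type*} [DecidableEq ι]

theorem update_zero_comp_swap [Zero M] (i j : ι) (a : M) :
    update (0 : ι → M) i a ∘ Equiv.swap i j = update (0 : ι → M) j a := by
  rw [update_comp_equiv, Equiv.symm_swap, Equiv.swap_apply_left]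
  rfl

theorem update_zero_ne_neg_update_zero [AddGroup M] {i j : ι} (hij : i ≠ j) {a : M} (ha : a ≠ 0)
    (b : M) : update (0 : ι → M) i a ≠ -update (0 : ι → M) j b := fun h =>
  ha (by simpa [update_of_ne hij] using congrFun h i)

end UpdateZero

theorem comp_swap_eq_self {ι α : Type*} [DecidableEq ι] {x : ι → α} {i j : ι} (h : x i = x j) :
    x ∘ Equiv.swap i j = x := by
  rw [Equiv.comp_swap_eq_update, h, update_eq_self, ← h, update_eq_self]

theorem not_injective_of_map_eq_neg {M N G : Type*} [AddCommGroup M] [AddCommGroup N]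
    [FunLike G M N] [AddMonoidHomClass G M N] (g : G) {u w : M} (huw : u ≠ -w)
    (h : g u = -g w) : ¬Injective g := fun hinj =>
  huw (hinj (by rw [h, map_neg]))

def ContinuousLinearEquiv.funCongrLeft (R M : Type*) {m n : Type*} [Semiring R]
    [AddCommMonoid M] [Module R M] [TopologicalSpace M] (e : m ≃ n) : (n → M) ≃L[R] (m → M) where
  __ := LinearEquiv.funCongrLeft R M e
  continuous_toFun := continuous_pi fun _ => continuous_apply _
  continuous_invFun := continuous_pi fun _ => continuous_apply _

section Antisymmetric

variable {𝕜 ι E F : Type*} [NontriviallyNormedField 𝕜] [Fintype ι]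
  [NormedAddCommGroup E] [NormedSpace 𝕜 E] [NormedAddCommGroup F] [NormedSpace 𝕜 F]

theorem fderiv_comp_perm_apply (f : (ι → E) → F) (σ : Equiv.Perm ι) (x v : ι → E) :
    fderiv 𝕜 (fun y => f (y ∘ σ)) x v = fderiv 𝕜 f (x ∘ σ) (v ∘ σ) :=
  congrArg (· v) ((ContinuousLinearEquiv.funCongrLeft 𝕜 E σ).comp_right_fderiv (f := f) (x := x))

theorem fderiv_apply_comp_perm_of_antisymm [DecidableEq ι] {f : (ι → E) → F}
    (hf : ∀ (σ : Equiv.Perm ι) (y : ι → E), f (y ∘ σ) = ((Equiv.Perm.sign σ : ℤ) : 𝕜) • f y)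
    (σ : Equiv.Perm ι) (x v : ι → E) :
    fderiv 𝕜 f (x ∘ σ) (v ∘ σ) = ((Equiv.Perm.sign σ : ℤ) : 𝕜) • fderiv 𝕜 f x v := by
  rw [← fderiv_comp_perm_apply,
    show (fun y => f (y ∘ σ)) = ((Equiv.Perm.sign σ : ℤ) : 𝕜) • f from funext (hf σ),
    fderiv_const_smul_field]
  rfl

theorem fderiv_apply_update_zero_eq_neg_of_antisymm [DecidableEq ι] {f : (ι → E) → F}
    (hf : ∀ (σ : Equiv.Perm ι) (y : ι → E), f (y ∘ σ) = ((Equiv.Perm.sign σ : ℤ) : 𝕜) • f y)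
    {x : ι → E} {i₁ i₂ : ι} (h12 : i₁ ≠ i₂) (hx : x i₁ = x i₂) (a : E) :
    fderiv 𝕜 f x (update 0 i₁ a) = -fderiv 𝕜 f x (update 0 i₂ a) := by
  have h := fderiv_apply_comp_perm_of_antisymm hf (Equiv.swap i₂ i₁) x (update 0 i₂ a)
  rwa [comp_swap_eq_self hx.symm, update_zero_comp_swap, Equiv.Perm.sign_swap h12.symm,
    Units.val_neg, Units.val_one, Int.cast_neg, Int.cast_one, neg_one_smul] at h

end Antisymmetric

theorem jacobian_rank_deficient_on_singular_general {d n m : ℕ} (hd : 0 < d)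
    (η : (Fin n → (Fin d → ℝ)) → (Fin m → ℝ))
    (hηa : ∀ (σ : Equiv.Perm (Fin n)) (x : Fin n → (Fin d → ℝ)),
      η (x ∘ σ) = ((Equiv.Perm.sign σ : ℤ) : ℝ) • η x)
    (x : Fin n → (Fin d → ℝ)) (i₁ i₂ : Fin n) (h12 : i₁ ≠ i₂) (hx : x i₁ = x i₂) :
    (∀ j : Fin d,
      fderiv ℝ η x (Function.update (0 : Fin n → (Fin d → ℝ)) i₁ (Pi.single j 1))
        = -fderiv ℝ η x (Function.update (0 : Fin n → (Fin d → ℝ)) i₂ (Pi.single j 1))) ∧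
    ¬Function.Injective ⇑(fderiv ℝ η x) := by
  have hpartial (j : Fin d) := fderiv_apply_update_zero_eq_neg_of_antisymm hηa h12 hx
    (Pi.single j (1 : ℝ))
  refine ⟨hpartial, not_injective_of_map_eq_neg _ ?_ (hpartial ⟨0, hd⟩)⟩
  exact update_zero_ne_neg_update_zero h12 (Pi.single_ne_zero_iff.mpr one_ne_zero) _

/-- At a configuration with `x_{i₁} = x_{i₂}` (`i₁ ≠ i₂`), the Jacobian of an anti-symmetric
`C¹` map `η` has opposite partial derivatives in the `(i₁,j)` and `(i₂,j)` coordinates, and in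
particular it does not have full column rank. -/
theorem jacobian_rank_deficient_on_singular {d n m : ℕ} (hd : 0 < d)
    (η : (Fin n → (Fin d → ℝ)) → (Fin m → ℝ))
    (hηsm : ContDiff ℝ 1 η)
    (hηa : ∀ (σ : Equiv.Perm (Fin n)) (x : Fin n → (Fin d → ℝ)),
      η (x ∘ σ) = ((Equiv.Perm.sign σ : ℤ) : ℝ) • η x)
    (x : Fin n → (Fin d → ℝ)) (i₁ i₂ : Fin n) (h12 : i₁ ≠ i₂) (hx : x i₁ = x i₂) :
    (∀ j : Fin d,
      fderiv ℝ η x (Function.update (0 : Fin n → (Fin d → ℝ)) i₁ (Pi.single j 1))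
        = -fderiv ℝ η x (Function.update (0 : Fin n → (Fin d → ℝ)) i₂ (Pi.single j 1))) ∧
    ¬Function.Injective ⇑(fderiv ℝ η x) :=
  jacobian_rank_deficient_on_singular_general hd η hηa x i₁ i₂ h12 hx
end

section
/- Let ψ : (ℝ^d)^n → ℝ^q with differentiable components, φ : (ℝ^d)^n → ℝ^p with differentiable components, and define η = (φ, ψ_1·φ, ..., ψ_q·φ) : (ℝ^d)^n → ℝ^{p(q+1)}. If at a point x we have φ_{i_0}(x) ≠ 0 for some i_0 and Jψ(x) has full column rank, then Jη(x) has full column rank. -/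
/-- If `η = (φ, ψ₁·φ, …, ψ_q·φ)`, `φ_{i₀}(x) ≠ 0` for some `i₀`, and `Jψ(x)` has full column
rank, then `Jη(x)` has full column rank. -/
theorem jacobian_full_rank_of_product_construction {d n p q : ℕ}
    (ψ : (Fin n → (Fin d → ℝ)) → (Fin q → ℝ))
    (φ : (Fin n → (Fin d → ℝ)) → (Fin p → ℝ))
    (η : (Fin n → (Fin d → ℝ)) → (Fin p × Option (Fin q) → ℝ))
    (hη : ∀ x i, η x (i, none) = φ x i ∧ ∀ l : Fin q, η x (i, some l) = ψ x l * φ x i)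
    (x : Fin n → (Fin d → ℝ))
    (hψd : DifferentiableAt ℝ ψ x) (hφd : DifferentiableAt ℝ φ x)
    (i₀ : Fin p) (hi₀ : φ x i₀ ≠ 0)
    (hψrank : Function.Injective ⇑(fderiv ℝ ψ x)) :
    Function.Injective ⇑(fderiv ℝ η x) := by
  set Dψ := fderiv ℝ ψ x with hDψ
  set Dφ := fderiv ℝ φ x with hDφ
  -- candidate derivative of η
  set L : (Fin n → (Fin d → ℝ)) →L[ℝ] (Fin p × Option (Fin q) → ℝ) :=
    ContinuousLinearMap.pi (fun c =>
      Option.rec ((ContinuousLinearMap.proj c.1).comp Dφ)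
        (fun l => ψ x l • ((ContinuousLinearMap.proj c.1).comp Dφ)
          + φ x c.1 • ((ContinuousLinearMap.proj l).comp Dψ)) c.2) with hL
  have hηHas : HasFDerivAt η L x := by
    rw [hasFDerivAt_pi']
    rintro ⟨i, (_ | l)⟩
    · have : (fun y => η y (i, none)) = fun y => φ y i := by
        funext y; exact (hη y i).1
      rw [show (ContinuousLinearMap.proj (i, none)).comp L
          = (ContinuousLinearMap.proj i).comp Dφ from ContinuousLinearMap.proj_pi _ _, this]
      exact (hasFDerivAt_pi'.1 hφd.hasFDerivAt) i
    · have : (fun y => η y (i, some l)) = fun y => ψ y l * φ y i := by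
        funext y; exact (hη y i).2 l
      rw [show (ContinuousLinearMap.proj (i, some l)).comp L
          = ψ x l • ((ContinuousLinearMap.proj i).comp Dφ)
            + φ x i • ((ContinuousLinearMap.proj l).comp Dψ)
          from ContinuousLinearMap.proj_pi _ _, this]
      exact ((hasFDerivAt_pi'.1 hψd.hasFDerivAt) l).mul ((hasFDerivAt_pi'.1 hφd.hasFDerivAt) i)
  rw [hηHas.fderiv]
  intro u v huv
  have key : ∀ w : (Fin n → (Fin d → ℝ)), L w = 0 → w = 0 := by
    intro w hw
    have hφ0 : ∀ i, Dφ w i = 0 := by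
      intro i
      have := congrFun hw (i, none)
      simpa [hL, ContinuousLinearMap.pi_apply] using this
    have hψ0 : Dψ w = 0 := by
      funext l
      have := congrFun hw (i₀, some l)
      simp [hL, ContinuousLinearMap.pi_apply, hφ0 i₀] at this
      rcases this with h | h
      · exact absurd h hi₀
      · simpa using h
    have : Dψ w = Dψ 0 := by simpa using hψ0
    exact hψrank this
  have : L (u - v) = 0 := by
    rw [map_sub, huv, sub_self]
  have := key _ this
  exact sub_eq_zero.mp this
end

section
/- Let d = 1, n = 2, Ω = [-1,1], η(x_1,x_2) = (x_1-x_2, (x_1-x_2)(x_1+x_2), (x_1-x_2)(x_1²+x_2²)), and f(x_1,x_2) = |x_1| - |x_2|. Then any function g : η(Ω²) → ℝ with f = g ∘ η is not Lipschitz continuous: specifically, with x = (2ε,0) and x' = (ε,-ε), |g(η(x)) - g(η(x'))| / ‖η(x) - η(x')‖ = 2ε / ‖(0,4ε²,4ε³)‖ → ∞ as ε → 0+. -/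
/-!
Along `x = (2ε, 0)` and `x' = (ε, -ε)` the first coordinates of `η` agree, so
`η x - η x' = (0, 4ε², 4ε³)` has norm `4ε²√(1 + ε²)`, while `f x - f x' = 2ε`. The difference
quotient of `g` is therefore `(2ε√(1 + ε²))⁻¹`, which is unbounded as `ε → 0⁺`.
-/

open Filter

open Topology Set

theorem not_lipschitzOnWith_of_tendsto_dist_div_atTop {ι α β : Type*}
    [PseudoMetricSpace α] [PseudoMetricSpace β] {g : α → β} {s : Set α} {l : Filter ι}
    [l.NeBot] {u v : ι → α} (hu : ∀ᶠ i in l, u i ∈ s) (hv : ∀ᶠ i in l, v i ∈ s)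
    (h : Tendsto (fun i => dist (g (u i)) (g (v i)) / dist (u i) (v i)) l atTop)
    (K : NNReal) : ¬LipschitzOnWith K g s := by
  intro hK
  obtain ⟨i, hi, hui, hvi⟩ := ((h.eventually_gt_atTop (K : ℝ)).and (hu.and hv)).exists
  exact hi.not_ge (div_le_of_le_mul₀ dist_nonneg K.2 (hK.dist_le_mul _ hui _ hvi))

theorem norm_sub_eq_of_eta {η : ℝ × ℝ → EuclideanSpace ℝ (Fin 3)}
    (hη : ∀ x : ℝ × ℝ, η x = (WithLp.equiv 2 (Fin 3 → ℝ)).symm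
      ![x.1 - x.2, (x.1 - x.2) * (x.1 + x.2), (x.1 - x.2) * (x.1 ^ 2 + x.2 ^ 2)]) (ε : ℝ) :
    ‖η (2 * ε, 0) - η (ε, -ε)‖ = 4 * ε ^ 2 * √(1 + ε ^ 2) := by
  have hsub : η (2 * ε, 0) - η (ε, -ε) = !₂[0, 4 * ε ^ 2, 4 * ε ^ 3] := by
    ext i
    fin_cases i <;> simp [hη] <;> ring
  have hsq : 0 ^ 2 + (4 * ε ^ 2) ^ 2 + (4 * ε ^ 3) ^ 2 = (4 * ε ^ 2) ^ 2 * (1 + ε ^ 2) := by ring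
  rw [hsub, EuclideanSpace.norm_eq]
  simp only [Fin.sum_univ_three, Real.norm_eq_abs, sq_abs, Matrix.cons_val]
  rw [hsq, Real.sqrt_mul (by positivity), Real.sqrt_sq (by positivity)]

theorem tendsto_inv_two_mul_sqrt_one_add_sq :
    Tendsto (fun ε : ℝ => (2 * ε * √(1 + ε ^ 2))⁻¹) (𝓝[>] 0) atTop := by
  refine Tendsto.inv_tendsto_nhdsGT_zero (tendsto_nhdsWithin_iff.2 ⟨?_, ?_⟩)
  · have hcont : Continuous fun ε : ℝ => 2 * ε * √(1 + ε ^ 2) := by fun_prop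
    simpa using (hcont.tendsto 0).mono_left nhdsWithin_le_nhds
  · filter_upwards [self_mem_nhdsWithin] with ε (hε : 0 < ε)
    exact mul_pos (by positivity) (Real.sqrt_pos.2 (by positivity))

/-- Counterexample for Lipschitz continuity: for `f(x₁,x₂) = |x₁| - |x₂|` and the explicit
`η`, any `g` on `η(Ω²)` with `f = g ∘ η` fails to be Lipschitz; the difference quotient along
`x = (2ε,0)`, `x' = (ε,-ε)` blows up as `ε → 0⁺`. -/
theorem counterexample_lipschitz
    (η : ℝ × ℝ → EuclideanSpace ℝ (Fin 3))
    (hη : ∀ x : ℝ × ℝ, η x = (WithLp.equiv 2 (Fin 3 → ℝ)).symm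
      ![x.1 - x.2, (x.1 - x.2) * (x.1 + x.2), (x.1 - x.2) * (x.1 ^ 2 + x.2 ^ 2)])
    (f : ℝ × ℝ → ℝ) (hf : ∀ x : ℝ × ℝ, f x = |x.1| - |x.2|)
    (D : Set (ℝ × ℝ)) (hD : D = Set.Icc (-1 : ℝ) 1 ×ˢ Set.Icc (-1 : ℝ) 1)
    (g : EuclideanSpace ℝ (Fin 3) → ℝ) (hg : ∀ x ∈ D, g (η x) = f x) :
    (∀ K : NNReal, ¬LipschitzOnWith K g (η '' D)) ∧
      Tendsto (fun ε : ℝ =>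
          |g (η (2 * ε, 0)) - g (η (ε, -ε))| / ‖η (2 * ε, 0) - η (ε, -ε)‖)
        (nhdsWithin 0 (Set.Ioi 0)) atTop := by
  subst hD
  have hmem : ∀ᶠ ε in 𝓝[>] (0 : ℝ), (2 * ε, (0 : ℝ)) ∈ Icc (-1 : ℝ) 1 ×ˢ Icc (-1 : ℝ) 1 ∧
      (ε, -ε) ∈ Icc (-1 : ℝ) 1 ×ˢ Icc (-1 : ℝ) 1 := by
    filter_upwards [Ioc_mem_nhdsGT (by norm_num : (0 : ℝ) < 1 / 2)] with ε ⟨h0, h1⟩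
    refine ⟨⟨⟨?_, ?_⟩, ?_, ?_⟩, ⟨?_, ?_⟩, ?_, ?_⟩ <;> dsimp only <;> linarith
  have hquot : (fun ε : ℝ => (2 * ε * √(1 + ε ^ 2))⁻¹) =ᶠ[𝓝[>] 0] fun ε =>
      |g (η (2 * ε, 0)) - g (η (ε, -ε))| / ‖η (2 * ε, 0) - η (ε, -ε)‖ := by
    filter_upwards [self_mem_nhdsWithin, hmem] with ε (hε : 0 < ε) ⟨hx, hx'⟩
    rw [hg _ hx, hg _ hx', hf, hf, norm_sub_eq_of_eta hη]
    simp only [abs_zero, abs_neg, abs_of_pos hε, sub_zero, sub_self, abs_two, abs_mul]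
    field_simp
    ring
  have htop := tendsto_inv_two_mul_sqrt_one_add_sq.congr' hquot
  refine ⟨not_lipschitzOnWith_of_tendsto_dist_div_atTop (hmem.mono fun ε h => ⟨_, h.1, rfl⟩)
    (hmem.mono fun ε h => ⟨_, h.2, rfl⟩) ?_, htop⟩
  simpa only [dist_eq_norm, Real.norm_eq_abs] using htop
end

section
/- Let d = 1, n = 2, η(x_1,x_2) = (x_1-x_2, (x_1-x_2)(x_1+x_2), (x_1-x_2)(x_1²+x_2²)), and f(x_1,x_2) = x_1^{4/3} - x_2^{4/3} on [-1,1]² (with t^{4/3} interpreted as sign-preserving or |t|^{4/3}). Then there is no continuously differentiable function g : ℝ³ → ℝ with f = g ∘ η on [-1,1]². -/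
/-!
If `f = g ∘ η` with `g` of class `C¹`, then `g` is Lipschitz near `η 0`, so
`|f x - f x'| = O(‖η x - η x'‖)` for `x, x' → 0`. Along `x = (ε, 0)`, `x' = (ε/2, -ε/2)` the
map `η` nearly collapses the two points, `η x - η x' = (0, ε², ε³/2)`, while
`f x - f x' = ε^{4/3}`; and `ε^{4/3}` is not `O(ε²)` as `ε → 0+`.
-/

open Asymptotics Filter Topology

theorem ContDiffAt.isBigO_sub_comp {E F α : Type*} [NormedAddCommGroup E] [NormedSpace ℝ E]
    [NormedAddCommGroup F] [NormedSpace ℝ F] {g : E → F} {x : E} (hg : ContDiffAt ℝ 1 g x)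
    {l : Filter α} {u v : α → E} (hu : Tendsto u l (𝓝 x)) (hv : Tendsto v l (𝓝 x)) :
    (fun t => g (u t) - g (v t)) =O[l] fun t => u t - v t :=
  (hg.hasStrictFDerivAt one_ne_zero).isBigO_sub.comp_tendsto (by simpa using hu.prodMk_nhds hv)

theorem isLittleO_rpow_rpow_nhdsGT_zero {p q : ℝ} (hpq : p < q) :
    (fun x : ℝ => x ^ q) =o[𝓝[>] 0] fun x => x ^ p := by
  have h : Tendsto (fun x : ℝ => x ^ (q - p)) (𝓝[>] 0) (𝓝 0) := by
    simpa [Real.zero_rpow (sub_ne_zero.2 hpq.ne')] using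
      (Real.continuousAt_rpow_const 0 (q - p) (Or.inr (sub_pos.2 hpq).le)).tendsto.mono_left
        nhdsWithin_le_nhds
  refine ((isLittleO_one_iff ℝ).2 h).mul_isBigO (isBigO_refl (fun x : ℝ => x ^ p) _)
    |>.congr' ?_ (by simp)
  filter_upwards [self_mem_nhdsWithin] with x hx
  rw [← Real.rpow_add hx, sub_add_cancel]

theorem not_isBigO_rpow_rpow_nhdsGT_zero {p q : ℝ} (hpq : p < q) :
    ¬(fun x : ℝ => x ^ p) =O[𝓝[>] 0] fun x => x ^ q :=
  (isLittleO_rpow_rpow_nhdsGT_zero hpq).not_isBigO <| Eventually.frequently <| by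
    filter_upwards [self_mem_nhdsWithin] with x hx using (Real.rpow_pos_of_pos hx q).ne'

def etaMap (x : ℝ × ℝ) : EuclideanSpace ℝ (Fin 3) :=
  (WithLp.equiv 2 (Fin 3 → ℝ)).symm
    ![x.1 - x.2, (x.1 - x.2) * (x.1 + x.2), (x.1 - x.2) * (x.1 ^ 2 + x.2 ^ 2)]

theorem continuous_etaMap : Continuous etaMap :=
  (PiLp.continuous_toLp 2 _).comp <| continuous_pi fun i => by fin_cases i <;> simp <;> fun_prop

theorem etaMap_sub_etaMap (ε : ℝ) :
    etaMap (ε, 0) - etaMap (ε / 2, -(ε / 2)) =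
      (WithLp.equiv 2 (Fin 3 → ℝ)).symm ![0, ε ^ 2, ε ^ 3 / 2] := by
  ext i; fin_cases i <;> simp [etaMap] <;> ring

theorem norm_etaMap_sub_le {ε : ℝ} (hε : |ε| ≤ 1) :
    ‖etaMap (ε, 0) - etaMap (ε / 2, -(ε / 2))‖ ≤ 2 * ε ^ 2 := by
  rw [etaMap_sub_etaMap, EuclideanSpace.norm_eq, Real.sqrt_le_left (by positivity)]
  have hε2 : ε ^ 2 ≤ 1 := by nlinarith [abs_nonneg ε, sq_abs ε]
  simp [Fin.sum_univ_three]
  nlinarith [mul_le_mul_of_nonneg_left hε2 (by positivity : (0 : ℝ) ≤ ε ^ 4)]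

theorem isBigO_etaMap_sub :
    (fun ε : ℝ => etaMap (ε, 0) - etaMap (ε / 2, -(ε / 2))) =O[𝓝 0] fun ε => ε ^ (2 : ℝ) := by
  refine IsBigO.of_bound 2 ?_
  filter_upwards [Metric.closedBall_mem_nhds (0 : ℝ) one_pos] with ε hε
  rw [Real.rpow_two, Real.norm_of_nonneg (sq_nonneg ε)]
  exact norm_etaMap_sub_le (by simpa using hε)

/-- Counterexample for continuous differentiability: for `f(x₁,x₂) = |x₁|^{4/3} - |x₂|^{4/3}`
and the explicit `η`, there is no `C¹` function `g : ℝ³ → ℝ` with `f = g ∘ η` on `[-1,1]²`. -/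
theorem counterexample_C1
    (η : ℝ × ℝ → EuclideanSpace ℝ (Fin 3))
    (hη : ∀ x : ℝ × ℝ, η x = (WithLp.equiv 2 (Fin 3 → ℝ)).symm
      ![x.1 - x.2, (x.1 - x.2) * (x.1 + x.2), (x.1 - x.2) * (x.1 ^ 2 + x.2 ^ 2)])
    (f : ℝ × ℝ → ℝ) (hf : ∀ x : ℝ × ℝ, f x = |x.1| ^ ((4 : ℝ) / 3) - |x.2| ^ ((4 : ℝ) / 3))
    (D : Set (ℝ × ℝ)) (hD : D = Set.Icc (-1 : ℝ) 1 ×ˢ Set.Icc (-1 : ℝ) 1) :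
    ¬∃ g : EuclideanSpace ℝ (Fin 3) → ℝ, ContDiff ℝ 1 g ∧ ∀ x ∈ D, g (η x) = f x := by
  obtain rfl : η = etaMap := funext hη
  subst hD
  rintro ⟨g, hg, hgf⟩
  have hlim : ∀ v : ℝ → ℝ × ℝ, Continuous v → v 0 = 0 →
      Tendsto (fun ε => etaMap (v ε)) (𝓝[>] 0) (𝓝 (etaMap 0)) := fun v hv hv0 =>
    ((continuous_etaMap.comp hv).tendsto' 0 _ (by simp [hv0])).mono_left nhdsWithin_le_nhds
  have hO := hg.contDiffAt.isBigO_sub_comp (hlim (fun ε => (ε, 0)) (by fun_prop) rfl)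
    (hlim (fun ε => (ε / 2, -(ε / 2))) (by fun_prop) (by simp))
  have hgap : (fun ε => g (etaMap (ε, 0)) - g (etaMap (ε / 2, -(ε / 2))))
      =ᶠ[𝓝[>] 0] fun ε => ε ^ ((4 : ℝ) / 3) := by
    filter_upwards [Ioc_mem_nhdsGT (zero_lt_one' ℝ)] with ε ⟨hε0, hε1⟩
    rw [hgf _ ⟨⟨by linarith, hε1⟩, by simp⟩,
      hgf _ ⟨⟨by linarith, by linarith⟩, by simp; linarith, by simp; linarith⟩, hf, hf]
    simp [abs_of_pos hε0]
  exact not_isBigO_rpow_rpow_nhdsGT_zero (by norm_num)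
    ((hO.congr' hgap .rfl).trans (isBigO_etaMap_sub.mono nhdsWithin_le_nhds))
end

section
/- The map η(x_1,x_2) = (x_1-x_2, (x_1-x_2)(x_1+x_2), (x_1-x_2)(x_1²+x_2²)) from ℝ² to ℝ³ satisfies: (i) each component is anti-symmetric (changes sign under swapping x_1 and x_2) and continuous; (ii) η(x_1,x_2) = 0 iff x_1 = x_2; (iii) if η(x_1,x_2) = η(x_1',x_2') ≠ 0 then (x_1',x_2') = (x_1,x_2) or (x_1',x_2') = (x_2,x_1). -/
/-- The explicit map `η(x₁,x₂) = (x₁-x₂, (x₁-x₂)(x₁+x₂), (x₁-x₂)(x₁²+x₂²))` is anti-symmetric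
and continuous, vanishes exactly on the diagonal, and separates orbits away from zero. -/
theorem explicit_eta_satisfies_assumptions
    (η : ℝ × ℝ → (Fin 3 → ℝ))
    (hη : ∀ x : ℝ × ℝ, η x =
      ![x.1 - x.2, (x.1 - x.2) * (x.1 + x.2), (x.1 - x.2) * (x.1 ^ 2 + x.2 ^ 2)]) :
    ((∀ x₁ x₂ : ℝ, ∀ k : Fin 3, η (x₂, x₁) k = -η (x₁, x₂) k) ∧ Continuous η) ∧
    (∀ x₁ x₂ : ℝ, η (x₁, x₂) = 0 ↔ x₁ = x₂) ∧
    (∀ x₁ x₂ x₁' x₂' : ℝ, η (x₁, x₂) = η (x₁', x₂') → η (x₁, x₂) ≠ 0 →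
      (x₁', x₂') = (x₁, x₂) ∨ (x₁', x₂') = (x₂, x₁)) := by
  refine ⟨⟨?_, ?_⟩, ?_, ?_⟩
  · intro x₁ x₂ k
    rw [hη, hη]
    fin_cases k <;> simp <;> ring
  · have : η = fun x : ℝ × ℝ =>
        ![x.1 - x.2, (x.1 - x.2) * (x.1 + x.2), (x.1 - x.2) * (x.1 ^ 2 + x.2 ^ 2)] :=
      funext hη
    rw [this]
    refine continuous_pi ?_
    intro k
    fin_cases k <;> simp <;> fun_prop
  · intro x₁ x₂
    rw [hη]
    constructor
    · intro h
      have h0 := congrFun h 0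
      simp at h0
      linarith
    · intro h
      subst h
      funext k
      fin_cases k <;> simp
  · intro x₁ x₂ x₁' x₂' heq hne
    left
    rw [hη, hη] at heq
    have h0 := congrFun heq 0
    have h1 := congrFun heq 1
    simp at h0 h1
    have hd : x₁ - x₂ ≠ 0 := by
      intro hd
      apply hne
      rw [hη]
      funext k
      fin_cases k <;> simp [hd]
    have hs : x₁ + x₂ = x₁' + x₂' := by
      have := h1
      rw [← h0] at this
      exact mul_left_cancel₀ hd this
    have : x₁' = x₁ ∧ x₂' = x₂ := ⟨by linarith, by linarith⟩
    simp [this.1, this.2]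
end

section
/- Suppose ψ : (ℝ^d)^n → ℝ^q is symmetric, continuous, and separates S_n-orbits (ψ(x) = ψ(x') iff x' is a permutation of x), and φ : (ℝ^d)^n → ℝ^p is a tuple of anti-symmetric continuous functions with φ(x) = 0 iff x_i = x_j for some i ≠ j. Then η = (φ, ψ_1 φ, ..., ψ_q φ) : (ℝ^d)^n → ℝ^{p(q+1)} satisfies: each component is anti-symmetric and continuous; η(x) = 0 iff x_i = x_j for some i ≠ j; and η(x) = η(x') ≠ 0 implies x' is a permutation of x. -/
/-!
The `none`-components of `η` are `φ` itself, so `η` inherits anti-symmetry, continuity and the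
zero set of `φ` (multiplying by the symmetric `ψ_l` preserves all three). If `η x = η x' ≠ 0`,
then `φ x = φ x'` has a nonzero entry `φ_i x`, and cancelling it in `ψ_l x φ_i x = ψ_l x' φ_i x'`
gives `ψ x = ψ x'`, so `x'` is a permutation of `x` because `ψ` separates orbits.
-/

section AppendProducts

variable {ι κ R : Type*}

/-- The tuple `(v, w₁ v, …, w_q v)`; the block `v` sits at the indices `(i, none)`. -/
def appendProducts [Mul R] (v : ι → R) (w : κ → R) : ι × Option κ → R
  | (i, none) => v i
  | (i, some l) => w l * v i

theorem appendProducts_eq_zero_iff [MulZeroClass R] {v : ι → R} {w : κ → R} :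
    appendProducts v w = 0 ↔ v = 0 := by
  constructor
  · intro h
    funext i
    exact congrFun h (i, none)
  · rintro rfl
    ext ⟨i, _ | l⟩ <;> simp [appendProducts]

theorem appendProducts_smul [CommSemigroup R] (c : R) (v : ι → R) (w : κ → R) :
    appendProducts (c • v) w = c • appendProducts v w := by
  ext ⟨i, _ | l⟩
  · rfl
  · exact mul_left_comm (w l) c (v i)

theorem Continuous.appendProducts {X : Type*} [TopologicalSpace X] [Mul R] [TopologicalSpace R]
    [ContinuousMul R] {f : X → ι → R} {g : X → κ → R} (hf : Continuous f) (hg : Continuous g) :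
    Continuous fun x => appendProducts (f x) (g x) := by
  refine continuous_pi fun ⟨i, l⟩ => ?_
  cases l with
  | none => exact continuous_apply i |>.comp hf
  | some l => exact (continuous_apply l |>.comp hg).mul (continuous_apply i |>.comp hf)

theorem appendProducts_inj_of_ne_zero [MulZeroClass R] [IsRightCancelMulZero R]
    {v v' : ι → R} {w w' : κ → R} (h : appendProducts v w = appendProducts v' w') (hv : v ≠ 0) :
    v = v' ∧ w = w' := by
  have hvv' : v = v' := funext fun i => congrFun h (i, none)
  subst hvv'
  obtain ⟨i, hi⟩ := Function.ne_iff.1 hv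
  exact ⟨rfl, funext fun l => mul_right_cancel₀ hi (congrFun h (i, some l))⟩

end AppendProducts

/-- Construction of the anti-symmetric basis: if `ψ` is symmetric, continuous and separates
`S_n`-orbits, and `φ` is anti-symmetric, continuous and vanishes exactly when two particles
coincide, then `η = (φ, ψ₁φ, …, ψ_qφ)` is anti-symmetric, continuous, vanishes exactly when two
particles coincide, and separates orbits away from zero. -/
theorem construction_satisfies_assumptions {d n p q : ℕ}
    (ψ : (Fin n → (Fin d → ℝ)) → (Fin q → ℝ))
    (hψc : Continuous ψ)
    (hψs : ∀ (σ : Equiv.Perm (Fin n)) (x : Fin n → (Fin d → ℝ)), ψ (x ∘ σ) = ψ x)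
    (hψsep : ∀ x x' : Fin n → (Fin d → ℝ),
      ψ x = ψ x' ↔ ∃ σ : Equiv.Perm (Fin n), x' = x ∘ σ)
    (φ : (Fin n → (Fin d → ℝ)) → (Fin p → ℝ))
    (hφc : Continuous φ)
    (hφa : ∀ (σ : Equiv.Perm (Fin n)) (x : Fin n → (Fin d → ℝ)),
      φ (x ∘ σ) = ((Equiv.Perm.sign σ : ℤ) : ℝ) • φ x)
    (hφ0 : ∀ x : Fin n → (Fin d → ℝ), φ x = 0 ↔ ∃ i j : Fin n, i ≠ j ∧ x i = x j)
    (η : (Fin n → (Fin d → ℝ)) → (Fin p × Option (Fin q) → ℝ))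
    (hη : ∀ x i, η x (i, none) = φ x i ∧ ∀ l : Fin q, η x (i, some l) = ψ x l * φ x i) :
    ((∀ (σ : Equiv.Perm (Fin n)) (x : Fin n → (Fin d → ℝ)),
        η (x ∘ σ) = ((Equiv.Perm.sign σ : ℤ) : ℝ) • η x) ∧ Continuous η) ∧
    (∀ x : Fin n → (Fin d → ℝ), η x = 0 ↔ ∃ i j : Fin n, i ≠ j ∧ x i = x j) ∧
    (∀ x x' : Fin n → (Fin d → ℝ), η x = η x' → η x ≠ 0 →
      ∃ σ : Equiv.Perm (Fin n), x' = x ∘ σ) := by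
  obtain rfl : η = fun x => appendProducts (φ x) (ψ x) := by
    ext x ⟨i, _ | l⟩
    exacts [(hη x i).1, (hη x i).2 l]
  refine ⟨⟨fun σ x => ?_, hφc.appendProducts hψc⟩, fun x => ?_, fun x x' h hne => ?_⟩
  · beta_reduce
    rw [hφa, hψs, appendProducts_smul]
  · beta_reduce
    rw [appendProducts_eq_zero_iff, hφ0]
  · have hφne : φ x ≠ 0 := fun h0 => hne (appendProducts_eq_zero_iff.2 h0)
    exact (hψsep x x').1 (appendProducts_inj_of_ne_zero h hφne).2
end
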